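/- Let Σ be an alphabet, Σ_1,…,Σ_n ⊆ Σ subalphabets with projections P_i, and K ⊆ L ⊆ Σ* languages. If the OCT condition holds, then the ALTOCT condition holds: there exist total functions f_i : Σ_i* → {Y,N,U} satisfying the ALTOCT requirements. -/
import Mathlib


/-- The three possible observer outputs: Yes, No, Unknown. -/
inductive Obs : Type
  | Y
  | N
  | U
deriving DecidableEq

/-- Projection onto subalphabet `Sub i`: keep only the letters lying in `Sub i`. -/
def P {α : Type*} {n : ℕ} (Sub : Fin n → Set α) [∀ i, DecidablePred (· ∈ Sub i)]
    (i : Fin n) (ρ : List α) : List α :=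
  ρ.filter (fun x => decide (x ∈ Sub i))

/-- Agent `i` can tell whether `ρ` is good or bad. -/
def cantell {α : Type*} {n : ℕ} (Sub : Fin n → Set α) [∀ i, DecidablePred (· ∈ Sub i)]
    (K L : Set (List α)) (i : Fin n) (ρ : List α) : Prop :=
  (ρ ∈ K → ¬ ∃ ρ' ∈ L \ K, P Sub i ρ = P Sub i ρ') ∧
  (ρ ∈ L \ K → ¬ ∃ ρ' ∈ K, P Sub i ρ = P Sub i ρ')

/-- The "at least one can tell" (OCT) condition. -/
def OCT {α : Type*} {n : ℕ} (Sub : Fin n → Set α) [∀ i, DecidablePred (· ∈ Sub i)]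
    (K L : Set (List α)) : Prop :=
  ∀ ρ ∈ L, ∃ i : Fin n, cantell Sub K L i ρ

/-- The given family of local decision functions satisfies the ALTOCT requirements. -/
def ALTOCTwith {α : Type*} {n : ℕ} (Sub : Fin n → Set α) [∀ i, DecidablePred (· ∈ Sub i)]
    (K L : Set (List α)) (f : Fin n → List α → Obs) : Prop :=
  (∀ ρ ∈ L, ∃ i : Fin n,
      (ρ ∈ K → f i (P Sub i ρ) = Obs.Y) ∧ (ρ ∈ L \ K → f i (P Sub i ρ) = Obs.N)) ∧
  (∀ ρ ∈ L, ∀ i : Fin n,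
      (f i (P Sub i ρ) = Obs.Y → ρ ∈ K) ∧ (f i (P Sub i ρ) = Obs.N → ρ ∈ L \ K))

/-- The alternative OCT (ALTOCT) condition: suitable local decision functions exist. -/
def ALTOCT {α : Type*} {n : ℕ} (Sub : Fin n → Set α) [∀ i, DecidablePred (· ∈ Sub i)]
    (K L : Set (List α)) : Prop :=
  ∃ f : Fin n → List α → Obs, ALTOCTwith Sub K L f

/-- OCT implies ALTOCT. -/
theorem OCT_implies_ALTOCT {α : Type*} {n : ℕ} (hn : 0 < n)
    (Sub : Fin n → Set α) [∀ i, DecidablePred (· ∈ Sub i)]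
    (K L : Set (List α)) (hKL : K ⊆ L)
    (h : OCT Sub K L) : ALTOCT Sub K L := by
  classical
  set Ycond : Fin n → List α → Prop :=
    fun i w => (∃ ρ₀ ∈ K, P Sub i ρ₀ = w) ∧ ¬ ∃ ρ' ∈ L \ K, P Sub i ρ' = w with hY
  set Ncond : Fin n → List α → Prop :=
    fun i w => (∃ ρ₀ ∈ L \ K, P Sub i ρ₀ = w) ∧ ¬ ∃ ρ' ∈ K, P Sub i ρ' = w with hN
  refine ⟨fun i w => if Ycond i w then Obs.Y else if Ncond i w then Obs.N else Obs.U, ?_, ?_⟩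
  · intro ρ hρ
    obtain ⟨i, hc1, hc2⟩ := h ρ hρ
    refine ⟨i, ?_, ?_⟩
    · intro hK
      have hy : Ycond i (P Sub i ρ) := by
        refine ⟨⟨ρ, hK, rfl⟩, ?_⟩
        rintro ⟨ρ', hρ', hpe⟩
        exact hc1 hK ⟨ρ', hρ', hpe.symm⟩
      simp only [if_pos hy]
    · intro hLK
      have hy : ¬ Ycond i (P Sub i ρ) := by
        rintro ⟨⟨ρ₀, hρ₀, hpe⟩, hno⟩
        exact hno ⟨ρ, hLK, rfl⟩
      have hnn : Ncond i (P Sub i ρ) := by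
        refine ⟨⟨ρ, hLK, rfl⟩, ?_⟩
        rintro ⟨ρ', hρ', hpe⟩
        exact hc2 hLK ⟨ρ', hρ', hpe.symm⟩
      simp only [if_neg hy, if_pos hnn]
  · intro ρ hρ i
    constructor
    · intro heq
      simp only at heq
      by_cases hy : Ycond i (P Sub i ρ)
      · by_cases hK : ρ ∈ K
        · exact hK
        · exact absurd ⟨ρ, ⟨hρ, hK⟩, rfl⟩ hy.2
      · rw [if_neg hy] at heq
        by_cases hnn : Ncond i (P Sub i ρ)
        · rw [if_pos hnn] at heq; exact absurd heq (by simp)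
        · rw [if_neg hnn] at heq; exact absurd heq (by simp)
    · intro heq
      simp only at heq
      by_cases hy : Ycond i (P Sub i ρ)
      · rw [if_pos hy] at heq; exact absurd heq (by simp)
      · rw [if_neg hy] at heq
        by_cases hnn : Ncond i (P Sub i ρ)
        · by_cases hK : ρ ∈ K
          · exact absurd ⟨ρ, hK, rfl⟩ hnn.2
          · exact ⟨hρ, hK⟩
        · rw [if_neg hnn] at heq; exact absurd heq (by simp)
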